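/- Let a_n = |PW_n| (so a_0 = 1) and let i_n be the number of irreducible packed words of length n. Then for every n ≥ 1, a_n = Σ_{k=1}^{n} i_k · a_{n−k}. -/

import Mathlib

/-!
Every nonempty packed word `w` factors uniquely as a skew sum `u ⊖ v` (the letters of `u` shifted
up by `max v`, followed by `v`) with `u` irreducible and `v` packed: cut `w` at its first global
descent, or take `v` empty if there is none. Uniqueness holds because the cut after a shorter
irreducible first factor would be a global descent inside the longer one. Counting the
factorizations by the length `k` of `u` gives the recurrence.
-/

/-- The maximum letter of a word (a list of natural numbers), with `wmax [] = 0`. -/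
def wmax (w : List ℕ) : ℕ := w.foldr max 0

/-- A word over the positive integers is packed if every letter from `1` to its maximum
occurs in it. -/
def IsPacked (w : List ℕ) : Prop :=
  (∀ x ∈ w, 0 < x) ∧ ∀ i : ℕ, 0 < i → i ≤ wmax w → i ∈ w

/-- `c` is a global descent of `w` (positions are 1-based, `1 ≤ c ≤ |w| - 1`). -/
def GlobalDescent (w : List ℕ) (c : ℕ) : Prop :=
  1 ≤ c ∧ c + 1 ≤ w.length ∧ ∀ a ∈ w.take c, ∀ b ∈ w.drop c, b < a

/-- A packed word is irreducible if it is nonempty and has no global descent. -/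
def Irred (w : List ℕ) : Prop :=
  IsPacked w ∧ w ≠ [] ∧ ∀ c, ¬ GlobalDescent w c

/-- `a n` is the number of packed words of length `n` (so `a 0 = 1`). -/
noncomputable def a (n : ℕ) : ℕ := Nat.card {w : List ℕ // IsPacked w ∧ w.length = n}

/-- `i n` is the number of irreducible packed words of length `n`. -/
noncomputable def i (n : ℕ) : ℕ := Nat.card {w : List ℕ // Irred w ∧ w.length = n}

lemma wmax_le_iff {w : List ℕ} {m : ℕ} : wmax w ≤ m ↔ ∀ x ∈ w, x ≤ m := by
  induction w with
  | nil => simp [wmax]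
  | cons y t ih => simp [wmax, ← ih]

lemma le_wmax {w : List ℕ} {x : ℕ} (h : x ∈ w) : x ≤ wmax w :=
  wmax_le_iff.1 le_rfl x h

lemma le_wmax_iff {w : List ℕ} {j : ℕ} (hj : 0 < j) : j ≤ wmax w ↔ ∃ x ∈ w, j ≤ x := by
  rw [← not_iff_not, not_le, Nat.lt_iff_le_pred hj, wmax_le_iff]
  push Not
  exact forall₂_congr fun x _ => by omega

lemma isPacked_iff {w : List ℕ} :
    IsPacked w ↔ (∀ x ∈ w, 0 < x) ∧ ∀ x ∈ w, ∀ j, 0 < j → j ≤ x → j ∈ w := by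
  refine and_congr_right fun _ => ⟨fun h x hx j hj hjx => h j hj (hjx.trans (le_wmax hx)),
    fun h j hj hjw => ?_⟩
  obtain ⟨x, hx, hjx⟩ := (le_wmax_iff hj).1 hjw
  exact h x hx j hj hjx

lemma IsPacked.wmax_le_length {w : List ℕ} (h : IsPacked w) : wmax w ≤ w.length := by
  have hsub : Finset.Icc 1 (wmax w) ⊆ w.toFinset := fun x hx => by
    rw [Finset.mem_Icc] at hx
    exact List.mem_toFinset.2 (h.2 x hx.1 hx.2)
  calc wmax w = (Finset.Icc 1 (wmax w)).card := by simp
    _ ≤ w.toFinset.card := Finset.card_le_card hsub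
    _ ≤ w.length := w.toFinset_card_le

lemma finite_setOf_isPacked_length_eq (n : ℕ) :
    {w : List ℕ | IsPacked w ∧ w.length = n}.Finite := by
  refine ((List.finite_length_eq (Fin (n + 1)) n).image (List.map Fin.val)).subset ?_
  rintro w ⟨hw, hlen⟩
  refine ⟨w.map (Fin.ofNat (n + 1)), by simp [hlen], ?_⟩
  rw [List.map_map]
  conv_rhs => rw [← List.map_id w]
  refine List.map_congr_left fun x hx => ?_
  have := (le_wmax hx).trans hw.wmax_le_length
  simp only [Function.comp_apply, Fin.val_ofNat, id]
  exact Nat.mod_eq_of_lt (by omega)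

instance (n : ℕ) : Finite {w : List ℕ // IsPacked w ∧ w.length = n} :=
  (finite_setOf_isPacked_length_eq n).to_subtype

instance (n : ℕ) : Finite {w : List ℕ // Irred w ∧ w.length = n} :=
  ((finite_setOf_isPacked_length_eq n).subset fun _ hw => ⟨hw.1.1, hw.2⟩).to_subtype

def skewSum (u v : List ℕ) : List ℕ := u.map (· + wmax v) ++ v

@[simp]
lemma length_skewSum (u v : List ℕ) : (skewSum u v).length = u.length + v.length := by
  simp [skewSum]

@[simp]
lemma skewSum_nil_right (u : List ℕ) : skewSum u [] = u := by
  simp [skewSum, wmax]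

lemma isPacked_skewSum_iff {u v : List ℕ} (hu : ∀ x ∈ u, 0 < x) :
    IsPacked (skewSum u v) ↔ IsPacked u ∧ IsPacked v := by
  set m := wmax v
  have hvm : ∀ y ∈ v, y ≤ m := fun y hy => le_wmax hy
  have mem : ∀ {y}, y ∈ skewSum u v ↔ (∃ x ∈ u, x + m = y) ∨ y ∈ v := by
    simp [skewSum, m]
  constructor
  · rw [isPacked_iff]
    rintro ⟨hpos, hdown⟩
    refine ⟨isPacked_iff.2 ⟨hu, fun x hx j hj hjx => ?_⟩, ⟨fun y hy => hpos y (mem.2 (.inr hy)),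
      fun j hj hjm => ?_⟩⟩
    · rcases mem.1 (hdown (x + m) (mem.2 (.inl ⟨x, hx, rfl⟩)) (j + m) (by omega) (by omega))
        with ⟨x', hx', hx'j⟩ | hv
      · rwa [show j = x' by omega]
      · have := hvm _ hv; omega
    · obtain ⟨y, hy, hjy⟩ := (le_wmax_iff hj).1 hjm
      rcases mem.1 (hdown y (mem.2 (.inr hy)) j hj hjy) with ⟨x, hx, rfl⟩ | hv
      · have := hu x hx; omega
      · exact hv
  · rintro ⟨hu', hv'⟩
    refine isPacked_iff.2 ⟨fun y hy => ?_, fun y hy j hj hjy => ?_⟩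
    · rcases mem.1 hy with ⟨x, hx, rfl⟩ | hy
      · have := hu x hx; omega
      · exact hv'.1 y hy
    · by_cases hjm : j ≤ m
      · exact mem.2 (.inr (hv'.2 j hj hjm))
      rcases mem.1 hy with ⟨x, hx, rfl⟩ | hy
      · exact mem.2 (.inl ⟨j - m, isPacked_iff.1 hu' |>.2 x hx _ (by omega) (by omega), by omega⟩)
      · have := hvm y hy; omega

lemma GlobalDescent.append {x y : List ℕ} {c : ℕ} (h : GlobalDescent x c)
    (hxy : ∀ a ∈ x, ∀ b ∈ y, b < a) : GlobalDescent (x ++ y) c := by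
  obtain ⟨h1, h2, h3⟩ := h
  have hc : c ≤ x.length := by omega
  refine ⟨h1, by simp; omega, fun a ha b hb => ?_⟩
  rw [List.take_append_of_le_length hc] at ha
  rw [List.drop_append_of_le_length hc, List.mem_append] at hb
  exact hb.elim (h3 a ha b) (hxy a (List.mem_of_mem_take ha) b)

lemma GlobalDescent.of_append {x y : List ℕ} {c : ℕ} (h : GlobalDescent (x ++ y) c)
    (hc : c < x.length) : GlobalDescent x c := by
  obtain ⟨h1, -, h3⟩ := h
  refine ⟨h1, hc, fun a ha b hb => h3 a ?_ b ?_⟩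
  · rwa [List.take_append_of_le_length hc.le]
  · rw [List.drop_append_of_le_length hc.le]
    exact List.mem_append_left _ hb

lemma globalDescent_map_add_iff {u : List ℕ} {m c : ℕ} :
    GlobalDescent (u.map (· + m)) c ↔ GlobalDescent u c := by
  simp [GlobalDescent, ← List.map_take, ← List.map_drop]

lemma lt_of_mem_map_add_wmax {u v : List ℕ} (hu : ∀ x ∈ u, 0 < x) :
    ∀ a ∈ u.map (· + wmax v), ∀ b ∈ v, b < a := by
  simp only [List.mem_map]
  rintro _ ⟨x, hx, rfl⟩ b hb
  have := le_wmax hb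
  have := hu x hx
  omega

lemma globalDescent_skewSum_iff_of_lt {u v : List ℕ} {c : ℕ} (hu : ∀ x ∈ u, 0 < x)
    (hc : c < u.length) : GlobalDescent (skewSum u v) c ↔ GlobalDescent u c :=
  ⟨fun h => globalDescent_map_add_iff.1 (h.of_append (by simpa using hc)),
    fun h => (globalDescent_map_add_iff.2 h).append (lt_of_mem_map_add_wmax hu)⟩

lemma globalDescent_skewSum_length {u v : List ℕ} (hu : ∀ x ∈ u, 0 < x) (hu₀ : u ≠ [])
    (hv₀ : v ≠ []) : GlobalDescent (skewSum u v) u.length := by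
  refine ⟨List.length_pos_iff.2 hu₀, by simpa [Nat.one_le_iff_ne_zero] using hv₀, ?_⟩
  rw [skewSum, List.take_left' (List.length_map _), List.drop_left' (List.length_map _)]
  exact lt_of_mem_map_add_wmax hu

lemma IsPacked.exists_skewSum_eq_of_globalDescent {w : List ℕ} {c : ℕ} (hw : IsPacked w)
    (h : GlobalDescent w c) :
    ∃ u v, (∀ x ∈ u, 0 < x) ∧ u.length = c ∧ skewSum u v = w := by
  set v := w.drop c
  set t := w.take c
  have hvt : ∀ a ∈ t, wmax v < a := fun a ha => by
    have hv : wmax v ≤ a - 1 := wmax_le_iff.2 fun b hb => by have := h.2.2 a ha b hb; omega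
    have := hw.1 a (List.mem_of_mem_take ha)
    omega
  have hshift : (t.map (· - wmax v)).map (· + wmax v) = t := by
    rw [List.map_map]
    conv_rhs => rw [← List.map_id t]
    exact List.map_congr_left fun a ha => by have := hvt a ha; simp; omega
  refine ⟨t.map (· - wmax v), v, ?_, by have := h.2.1; simp [t]; omega, ?_⟩
  · simp only [List.mem_map]
    rintro _ ⟨a, ha, rfl⟩
    have := hvt a ha
    omega
  · rw [skewSum, hshift, List.take_append_drop]

lemma IsPacked.exists_irred_skewSum_eq {w : List ℕ} (hw : IsPacked w) (hw₀ : w ≠ []) :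
    ∃ u v, Irred u ∧ IsPacked v ∧ skewSum u v = w := by
  classical
  by_cases hgd : ∃ c, GlobalDescent w c
  · obtain ⟨u, v, hu, hlen, rfl⟩ := hw.exists_skewSum_eq_of_globalDescent (Nat.find_spec hgd)
    obtain ⟨hu', hv'⟩ := (isPacked_skewSum_iff hu).1 hw
    refine ⟨u, v, ⟨hu', ?_, fun c hc => ?_⟩, hv', rfl⟩
    · rintro rfl
      exact absurd (Nat.find_spec hgd).1 (by simp [← hlen])
    · have hcu : c < u.length := hc.2.1
      exact Nat.find_min hgd (hlen ▸ hcu) ((globalDescent_skewSum_iff_of_lt hu hcu).2 hc)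
  · refine ⟨w, [], ⟨hw, hw₀, not_exists.1 hgd⟩, ?_, skewSum_nil_right w⟩
    simp [IsPacked, wmax, Nat.pos_iff_ne_zero]

lemma Irred.length_le_of_skewSum_eq {u v u' v' : List ℕ} (hu : ∀ x ∈ u, 0 < x) (hu₀ : u ≠ [])
    (hu' : Irred u') (h : skewSum u v = skewSum u' v') : u'.length ≤ u.length := by
  by_contra! hlt
  have hv₀ : v ≠ [] := by
    rintro rfl
    have := congrArg List.length h
    simp at this
    omega
  have hgd := globalDescent_skewSum_length hu hu₀ hv₀
  rw [h] at hgd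
  exact hu'.2.2 _ ((globalDescent_skewSum_iff_of_lt hu'.1.1 hlt).1 hgd)

lemma skewSum_inj_of_irred {u v u' v' : List ℕ} (hu : Irred u) (hu' : Irred u')
    (h : skewSum u v = skewSum u' v') : u = u' ∧ v = v' := by
  have hlen : u.length = u'.length :=
    le_antisymm (hu.length_le_of_skewSum_eq hu'.1.1 hu'.2.1 h.symm)
      (hu'.length_le_of_skewSum_eq hu.1.1 hu.2.1 h)
  obtain ⟨hmap, rfl⟩ := List.append_inj h (by simp [hlen])
  exact ⟨List.map_injective_iff.2 (add_left_injective (wmax v)) hmap, rfl⟩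

def skewSumSigma (n : ℕ) :
    (Σ k : Finset.Icc 1 n, {u : List ℕ // Irred u ∧ u.length = k} ×
      {v : List ℕ // IsPacked v ∧ v.length = n - k}) →
    {w : List ℕ // IsPacked w ∧ w.length = n} :=
  fun ⟨k, u, v⟩ => ⟨skewSum u v, (isPacked_skewSum_iff u.2.1.1.1).2 ⟨u.2.1.1, v.2.1⟩, by
    have := Finset.mem_Icc.1 k.2
    rw [length_skewSum, u.2.2, v.2.2]
    omega⟩

lemma skewSumSigma_injective (n : ℕ) : Function.Injective (skewSumSigma n) := by
  rintro ⟨⟨k, _⟩, ⟨u, hu, hlen⟩, ⟨v, _⟩⟩ ⟨⟨k', _⟩, ⟨u', hu', hlen'⟩, ⟨v', _⟩⟩ h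
  obtain ⟨rfl, rfl⟩ := skewSum_inj_of_irred hu hu' (congrArg Subtype.val h)
  obtain rfl : k = k' := hlen.symm.trans hlen'
  rfl

lemma skewSumSigma_surjective {n : ℕ} (hn : 1 ≤ n) : Function.Surjective (skewSumSigma n) := by
  rintro ⟨w, hw, rfl⟩
  obtain ⟨u, v, hu, hv, rfl⟩ := hw.exists_irred_skewSum_eq (by rintro rfl; simp at hn)
  have hu₀ := List.length_pos_iff.2 hu.2.1
  exact ⟨⟨⟨u.length, by simp; omega⟩, ⟨u, hu, rfl⟩, ⟨v, hv, by simp⟩⟩, rfl⟩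

theorem card_packedWords_recurrence (n : ℕ) (hn : 1 ≤ n) :
    a n = ∑ k ∈ Finset.Icc 1 n, i k * a (n - k) := by
  rw [a, ← Nat.card_eq_of_bijective _ ⟨skewSumSigma_injective n, skewSumSigma_surjective hn⟩,
    Nat.card_sigma]
  simp only [Nat.card_prod]
  exact Finset.sum_coe_sort (Finset.Icc 1 n) fun k => i k * a (n - k)
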